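/- arXiv:2412.01022 — 8 statements merged into one kernel-verified Lean document; each statement's English description precedes it below -/
import Mathlib

section
/- Let E ⊆ ℝⁿ (n ≥ 2) be an open set whose 1-nonsemiconvexity-point set E^◇ is nonempty, and let y ∈ E^◇. Then there exists d(y) > 0 such that for every unit vector α ∈ S^{n-1} there exists a point x_α(y) on the ray {tα + y : t ≥ 0} with x_α(y) ∈ E and the open ball U(x_α(y), d(y)) contained in E. (The radius d(y) depends only on y, not on α.) -/
open Set Metric

/-- The closed ray with endpoint `x` in direction `α`. -/
def ray {n : ℕ} (x α : EuclideanSpace ℝ (Fin n)) : Set (EuclideanSpace ℝ (Fin n)) :=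
  {z | ∃ t : ℝ, 0 ≤ t ∧ z = x + t • α}

/-- The straight line through `x` in direction `α`. -/
def line {n : ℕ} (x α : EuclideanSpace ℝ (Fin n)) : Set (EuclideanSpace ℝ (Fin n)) :=
  {z | ∃ t : ℝ, z = x + t • α}

/-- The set `E^◇` of 1-nonsemiconvexity points of `E`. -/
def diamond {n : ℕ} (E : Set (EuclideanSpace ℝ (Fin n))) : Set (EuclideanSpace ℝ (Fin n)) :=
  {x | x ∉ E ∧ ∀ α : EuclideanSpace ℝ (Fin n), ‖α‖ = 1 → (ray x α ∩ E).Nonempty}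

/-- The set `E^△` of 1-nonconvexity points of `E`. -/
def triangle {n : ℕ} (E : Set (EuclideanSpace ℝ (Fin n))) : Set (EuclideanSpace ℝ (Fin n)) :=
  {x | x ∉ E ∧ ∀ α : EuclideanSpace ℝ (Fin n), ‖α‖ = 1 → (line x α ∩ E).Nonempty}

/-- An (open) set is weakly 1-semiconvex if through every boundary point
there passes a closed ray missing the set. -/
def WeaklySemiconvex {n : ℕ} (E : Set (EuclideanSpace ℝ (Fin n))) : Prop :=
  ∀ x ∈ frontier E, ∃ α : EuclideanSpace ℝ (Fin n), ‖α‖ = 1 ∧ ray x α ∩ E = ∅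

/-- An (open) set is weakly 1-convex if through every boundary point
there passes a straight line missing the set. -/
def WeaklyConvex {n : ℕ} (E : Set (EuclideanSpace ℝ (Fin n))) : Prop :=
  ∀ x ∈ frontier E, ∃ α : EuclideanSpace ℝ (Fin n), ‖α‖ = 1 ∧ line x α ∩ E = ∅

/-!
The distance `infDist x Eᶜ` from `x` to the complement of `E` is positive on the open set `E`, and
`U(x, infDist x Eᶜ) ⊆ E`. For each `t ≥ 0` the function `α ↦ infDist (y + t α) Eᶜ` is continuous,
and for every unit `α` one of them is positive at `α` because the ray from `y` in direction `α`
meets `E`. By compactness of the unit sphere a single `d > 0` bounds one of them from below at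
every unit `α`, which is the required radius.
-/

theorem IsCompact.exists_pos_forall_exists_lt {X ι : Type*} [TopologicalSpace X] {K : Set X}
    (hK : IsCompact K) {f : ι → X → ℝ} (hf : ∀ i, LowerSemicontinuous (f i))
    (hpos : ∀ x ∈ K, ∃ i, 0 < f i x) : ∃ d > 0, ∀ x ∈ K, ∃ i, d < f i x := by
  let U : ℕ → Set X := fun k ↦ ⋃ i, f i ⁻¹' Ioi (1 / (k + 1))
  have hU_open : ∀ k, IsOpen (U k) := fun k ↦ isOpen_iUnion fun i ↦ (hf i).isOpen_preimage _
  have hU_mono : Monotone U := fun k l hkl ↦ iUnion_mono fun i ↦ preimage_mono <|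
    Ioi_subset_Ioi <| one_div_le_one_div_of_le (by positivity) (by gcongr)
  have hKU : K ⊆ ⋃ k, U k := fun x hx ↦ by
    obtain ⟨i, hi⟩ := hpos x hx
    obtain ⟨k, hk⟩ := exists_nat_one_div_lt hi
    exact mem_iUnion.2 ⟨k, mem_iUnion.2 ⟨i, hk⟩⟩
  obtain ⟨k, hk⟩ := hK.elim_directed_cover U hU_open hKU hU_mono.directed_le
  exact ⟨1 / (k + 1), by positivity, fun x hx ↦ mem_iUnion.1 (hk hx)⟩

theorem IsOpen.infDist_compl_pos {X : Type*} [MetricSpace X] {E : Set X} (hE : IsOpen E)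
    (hE' : Eᶜ.Nonempty) {x : X} (hx : x ∈ E) : 0 < infDist x Eᶜ := by
  rw [← infDist_pos_iff_notMem_closure hE', hE.isClosed_compl.closure_eq]
  exact not_not_intro hx

theorem diamond_uniform_ball_general {n : ℕ} (E : Set (EuclideanSpace ℝ (Fin n)))
    (hE : IsOpen E)
    (y : EuclideanSpace ℝ (Fin n)) (hy : y ∈ diamond E) :
    ∃ d : ℝ, 0 < d ∧ ∀ α : EuclideanSpace ℝ (Fin n), ‖α‖ = 1 →
      ∃ x : EuclideanSpace ℝ (Fin n), x ∈ ray y α ∧ x ∈ E ∧ ball x d ⊆ E := by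
  obtain ⟨hyE, hray⟩ := hy
  let ρ : Ici (0 : ℝ) → EuclideanSpace ℝ (Fin n) → ℝ := fun t α ↦ infDist (y + (t : ℝ) • α) Eᶜ
  have hρ : ∀ t, LowerSemicontinuous (ρ t) := fun t ↦
    (continuous_infDist_pt _ |>.comp (by fun_prop)).lowerSemicontinuous
  have hρ_pos : ∀ α ∈ sphere 0 1, ∃ t, 0 < ρ t α := by
    intro α hα
    obtain ⟨x, ⟨t, ht, rfl⟩, hxE⟩ := hray α (mem_sphere_zero_iff_norm.1 hα)
    exact ⟨⟨t, ht⟩, hE.infDist_compl_pos ⟨y, hyE⟩ hxE⟩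
  obtain ⟨d, hd, hρd⟩ := (isCompact_sphere 0 1).exists_pos_forall_exists_lt hρ hρ_pos
  refine ⟨d, hd, fun α hα ↦ ?_⟩
  obtain ⟨⟨t, ht⟩, hdt⟩ := hρd α (mem_sphere_zero_iff_norm.2 hα)
  have hball : ball (y + t • α) d ⊆ E := (ball_subset_ball hdt.le).trans ball_infDist_compl_subset
  exact ⟨_, ⟨t, ht, rfl⟩, hball (mem_ball_self hd), hball⟩

theorem diamond_uniform_ball {n : ℕ} (hn : 2 ≤ n) (E : Set (EuclideanSpace ℝ (Fin n)))
    (hE : IsOpen E) (hne : (diamond E).Nonempty)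
    (y : EuclideanSpace ℝ (Fin n)) (hy : y ∈ diamond E) :
    ∃ d : ℝ, 0 < d ∧ ∀ α : EuclideanSpace ℝ (Fin n), ‖α‖ = 1 →
      ∃ x : EuclideanSpace ℝ (Fin n), x ∈ ray y α ∧ x ∈ E ∧ ball x d ⊆ E :=
  diamond_uniform_ball_general E hE y hy
end

section
/- Let E ⊆ ℝⁿ (n ≥ 2) be an open set whose 1-nonconvexity-point set E^△ is nonempty, and let y ∈ E^△. Then there exists d(y) > 0 such that for every unit vector α ∈ S^{n-1} there exists a point x_α(y) on the straight line {tα + y : t ∈ ℝ} with x_α(y) ∈ E and the open ball U(x_α(y), d(y)) contained in E. -/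
open Set Metric

/-! A point `y + t • α` of `E` on the line through `y` in direction `α` stays the centre of a ball of
fixed radius inside `E` when `α` is moved slightly, since `E` is open and `α ↦ y + t • α` is
continuous; compactness of the unit sphere turns these local radii into one uniform radius. -/

open Filter Topology

theorem IsOpen.eventually_ball_subset {X : Type*} [PseudoMetricSpace X] {U : Set X}
    (hU : IsOpen U) {x₀ : X} (hx₀ : x₀ ∈ U) :
    ∀ᶠ p : X × ℝ in 𝓝 (x₀, 0), ball p.1 p.2 ⊆ U := by
  obtain ⟨r, hr, hball⟩ := Metric.isOpen_iff.mp hU x₀ hx₀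
  rw [nhds_prod_eq]
  filter_upwards [prod_mem_prod (ball_mem_nhds x₀ (half_pos hr))
    (ball_mem_nhds (0 : ℝ) (half_pos hr))] with ⟨x, ρ⟩ ⟨hx, hρ⟩
  refine (ball_subset_ball' ?_).trans hball
  rw [mem_ball] at hx
  rw [mem_ball, Real.dist_0_eq_abs] at hρ
  linarith [le_abs_self ρ]

theorem IsCompact.exists_uniform_ball_subset {A X T : Type*} [TopologicalSpace A]
    [PseudoMetricSpace X] {U : Set X} (hU : IsOpen U) {K : Set A} (hK : IsCompact K)
    {f : T → A → X} (hf : ∀ t, Continuous (f t)) (hKU : ∀ a ∈ K, ∃ t, f t a ∈ U) :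
    ∃ d > 0, ∀ a ∈ K, ∃ t, ball (f t a) d ⊆ U := by
  have hlocal : ∀ a ∈ K, ∀ᶠ p : ℝ × A in 𝓝[>] 0 ×ˢ 𝓝 a, ∃ t, ball (f t p.2) p.1 ⊆ U := by
    intro a ha
    obtain ⟨t, hta⟩ := hKU a ha
    have hmap : Tendsto (fun p : ℝ × A => (f t p.2, p.1)) (𝓝[>] 0 ×ˢ 𝓝 a) (𝓝 (f t a, 0)) := by
      rw [nhds_prod_eq]
      exact (((hf t).tendsto a).comp tendsto_snd).prodMk
        ((tendsto_nhdsWithin_of_tendsto_nhds tendsto_id).comp tendsto_fst)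
    exact (hmap.eventually (hU.eventually_ball_subset hta)).mono fun _ h => ⟨t, h⟩
  have hsmall : ∀ᶠ d in 𝓝[>] (0 : ℝ), ∀ a ∈ K, ∃ t, ball (f t a) d ⊆ U :=
    (Eventually.curry (hK.mem_prod_nhdsSet_of_forall hlocal)).mono fun _ h => h.self_of_nhdsSet
  exact (hsmall.and self_mem_nhdsWithin).exists.imp fun d hd => ⟨hd.2, hd.1⟩

theorem triangle_uniform_ball_general {n : ℕ} (E : Set (EuclideanSpace ℝ (Fin n)))
    (hE : IsOpen E)
    (y : EuclideanSpace ℝ (Fin n)) (hy : y ∈ triangle E) :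
    ∃ d : ℝ, 0 < d ∧ ∀ α : EuclideanSpace ℝ (Fin n), ‖α‖ = 1 →
      ∃ x : EuclideanSpace ℝ (Fin n), x ∈ line y α ∧ x ∈ E ∧ ball x d ⊆ E := by
  have hlines : ∀ α ∈ sphere (0 : EuclideanSpace ℝ (Fin n)) 1, ∃ t : ℝ, y + t • α ∈ E := by
    intro α hα
    obtain ⟨x, ⟨t, rfl⟩, hx⟩ := hy.2 α (mem_sphere_zero_iff_norm.mp hα)
    exact ⟨t, hx⟩
  obtain ⟨d, hd, hball⟩ := (isCompact_sphere 0 1).exists_uniform_ball_subset hE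
    (f := fun t α => y + t • α) (fun t => by fun_prop) hlines
  refine ⟨d, hd, fun α hα => ?_⟩
  obtain ⟨t, ht⟩ := hball α (mem_sphere_zero_iff_norm.mpr hα)
  exact ⟨y + t • α, ⟨t, rfl⟩, ht (mem_ball_self hd), ht⟩

theorem triangle_uniform_ball {n : ℕ} (hn : 2 ≤ n) (E : Set (EuclideanSpace ℝ (Fin n)))
    (hE : IsOpen E) (hne : (triangle E).Nonempty)
    (y : EuclideanSpace ℝ (Fin n)) (hy : y ∈ triangle E) :
    ∃ d : ℝ, 0 < d ∧ ∀ α : EuclideanSpace ℝ (Fin n), ‖α‖ = 1 →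
      ∃ x : EuclideanSpace ℝ (Fin n), x ∈ line y α ∧ x ∈ E ∧ ball x d ⊆ E :=
  triangle_uniform_ball_general E hE y hy
end

section
/- Let E ⊆ ℝⁿ (n ≥ 2) be an open weakly 1-semiconvex set whose 1-nonsemiconvexity-point set E^◇ is nonempty. Then E^◇ is open. -/
open Set Metric

/-! A point of `E^◇` cannot lie on the frontier of `E` (a boundary point has a ray missing `E`),
so it has a neighbourhood disjoint from `E`. Each ray from it meets the open set `E`, and
this persists when the endpoint and the direction are perturbed; compactness of the unit
sphere makes the perturbation of the endpoint uniform in the direction. -/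

open Filter Topology

theorem isOpen_setOf_ray_inter_nonempty {n : ℕ} {E : Set (EuclideanSpace ℝ (Fin n))}
    (hE : IsOpen E) :
    IsOpen {p : EuclideanSpace ℝ (Fin n) × EuclideanSpace ℝ (Fin n) |
      (ray p.1 p.2 ∩ E).Nonempty} := by
  have h : {p : EuclideanSpace ℝ (Fin n) × EuclideanSpace ℝ (Fin n) |
      (ray p.1 p.2 ∩ E).Nonempty} =
      ⋃ t ∈ Ici (0 : ℝ), (fun p => p.1 + t • p.2) ⁻¹' E := by
    ext p
    simp only [ray, mem_ofPred_eq, mem_iUnion, mem_preimage, mem_Ici, exists_prop]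
    constructor
    · rintro ⟨_, ⟨t, ht, rfl⟩, hz⟩
      exact ⟨t, ht, hz⟩
    · rintro ⟨t, ht, hz⟩
      exact ⟨_, ⟨t, ht, rfl⟩, hz⟩
  rw [h]
  exact isOpen_biUnion fun t _ => hE.preimage (by fun_prop)

theorem notMem_closure_of_mem_diamond {n : ℕ} {E : Set (EuclideanSpace ℝ (Fin n))}
    (hE : IsOpen E) (hws : WeaklySemiconvex E) {x : EuclideanSpace ℝ (Fin n)}
    (hx : x ∈ diamond E) : x ∉ closure E := by
  intro hcl
  obtain ⟨α, hα, hray⟩ := hws x ⟨hcl, by rw [hE.interior_eq]; exact hx.1⟩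
  exact (hx.2 α hα).ne_empty hray

theorem diamond_isOpen_general {n : ℕ} (E : Set (EuclideanSpace ℝ (Fin n)))
    (hE : IsOpen E) (hws : WeaklySemiconvex E) :
    IsOpen (diamond E) := by
  refine isOpen_iff_eventually.2 fun x hx => ?_
  have hxcl : x ∉ closure E := notMem_closure_of_mem_diamond hE hws hx
  have hoff : ∀ᶠ y in 𝓝 x, y ∉ E :=
    mem_of_superset (isClosed_closure.isOpen_compl.mem_nhds hxcl)
      (compl_subset_compl.2 subset_closure)
  have hrays : ∀ᶠ y in 𝓝 x, ∀ α ∈ sphere (0 : EuclideanSpace ℝ (Fin n)) 1,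
      (ray y α ∩ E).Nonempty :=
    (isCompact_sphere 0 1).eventually_forall_of_forall_eventually fun α hα =>
      (isOpen_setOf_ray_inter_nonempty hE).mem_nhds (hx.2 α (mem_sphere_zero_iff_norm.1 hα))
  filter_upwards [hoff, hrays] with y hyE hy
  exact ⟨hyE, fun α hα => hy α (mem_sphere_zero_iff_norm.2 hα)⟩

theorem diamond_isOpen {n : ℕ} (hn : 2 ≤ n) (E : Set (EuclideanSpace ℝ (Fin n)))
    (hE : IsOpen E) (hws : WeaklySemiconvex E) (hne : (diamond E).Nonempty) :
    IsOpen (diamond E) :=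
  diamond_isOpen_general E hE hws
end

section
/- Let E ⊆ ℝⁿ (n ≥ 2) be an open weakly 1-convex set whose 1-nonconvexity-point set E^△ is nonempty. Then E^△ is open. -/
open Set Metric

/-
A weakly 1-convex open set has no 1-nonconvexity points on its boundary, so `E^△` is
the intersection of `(closure E)ᶜ` with the set of points all of whose lines meet `E`.  The latter is open: its complement
is the projection to the first factor of the closed set of pairs `(x, α)`, `α` in the
unit sphere, whose line misses `E`, and projection along a compact factor is closed.
-/

section

variable {n : ℕ} {E : Set (EuclideanSpace ℝ (Fin n))}

theorem line_inter_eq_empty_iff {x α : EuclideanSpace ℝ (Fin n)} :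
    line x α ∩ E = ∅ ↔ ∀ t : ℝ, x + t • α ∉ E := by
  simp [line, eq_empty_iff_forall_notMem]

theorem isClosed_setOf_exists_line_inter_eq_empty (hE : IsOpen E) :
    IsClosed {x | ∃ α : EuclideanSpace ℝ (Fin n), ‖α‖ = 1 ∧ line x α ∩ E = ∅} := by
  let S := sphere (0 : EuclideanSpace ℝ (Fin n)) 1
  have hmiss :
      IsClosed {p : EuclideanSpace ℝ (Fin n) × S | ∀ t : ℝ, p.1 + t • (p.2 : _) ∉ E} := by
    simp only [ofPred_forall]
    exact isClosed_iInter fun t => hE.isClosed_compl.preimage (by fun_prop)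
  convert isClosedMap_fst_of_compactSpace _ hmiss using 1
  ext x
  simp [line_inter_eq_empty_iff, S]

theorem isOpen_setOf_forall_line_inter_nonempty (hE : IsOpen E) :
    IsOpen
      {x | ∀ α : EuclideanSpace ℝ (Fin n), ‖α‖ = 1 → (line x α ∩ E).Nonempty} := by
  convert (isClosed_setOf_exists_line_inter_eq_empty hE).isOpen_compl using 1
  ext x
  simp [nonempty_iff_ne_empty]

theorem triangle_eq_compl_closure_inter (hE : IsOpen E) (hwc : WeaklyConvex E) :
    triangle E =
      (closure E)ᶜ ∩
        {x | ∀ α : EuclideanSpace ℝ (Fin n), ‖α‖ = 1 → (line x α ∩ E).Nonempty} := by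
  ext x
  refine ⟨fun ⟨_, hlines⟩ => ⟨fun hxcl => ?_, hlines⟩,
    fun ⟨hxcl, hlines⟩ => ⟨fun hxE => hxcl (subset_closure hxE), hlines⟩⟩
  obtain ⟨α, hα, hmiss⟩ := hwc x ⟨hxcl, by rwa [hE.interior_eq]⟩
  exact (hlines α hα).ne_empty hmiss

end

theorem triangle_isOpen_general {n : ℕ} (E : Set (EuclideanSpace ℝ (Fin n)))
    (hE : IsOpen E) (hwc : WeaklyConvex E) :
    IsOpen (triangle E) := by
  rw [triangle_eq_compl_closure_inter hE hwc]
  exact isClosed_closure.isOpen_compl.inter (isOpen_setOf_forall_line_inter_nonempty hE)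

theorem triangle_isOpen {n : ℕ} (hn : 2 ≤ n) (E : Set (EuclideanSpace ℝ (Fin n)))
    (hE : IsOpen E) (hwc : WeaklyConvex E) (hne : (triangle E).Nonempty) :
    IsOpen (triangle E) :=
  triangle_isOpen_general E hE hwc
end

section
/- Let E ⊆ ℝⁿ (n ≥ 2) be a closed set with nonempty interior. If E is weakly 1-convex (i.e., E can be approximated from the outside by a family of open weakly 1-convex sets), then the interior of E is weakly 1-convex (i.e., through every boundary point of Int E there passes a straight line not intersecting Int E). -/
open Set Metric Filter Topology

/-!
Let `x` be a boundary point of `int E`. Since `x ∉ int E`, there are points `z ∉ E`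
arbitrarily close to `x`, and each of them lies outside some `G k`, while `x ∈ G k`. The segment
`[x, z]` then crosses the boundary of `G k` at a point `p`, and the line through `p` missing `G k`
also misses `int E`. So `x` is a limit of points through which a line misses `int E`; by
compactness of the unit sphere the set of such points is closed, so a line through `x` misses
`int E` as well.
-/

lemma IsPreconnected.inter_frontier_nonempty {X : Type*} [TopologicalSpace X] {s u : Set X}
    (hs : IsPreconnected s) (hsu : (s ∩ u).Nonempty) (hsu' : (s \ u).Nonempty) :
    (s ∩ frontier u).Nonempty := by
  by_contra hfr
  have hcover : s ⊆ interior u ∪ (closure u)ᶜ := fun y hy => by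
    by_cases hyc : y ∈ closure u
    · exact Or.inl (by_contra fun hyi => hfr ⟨y, hy, hyc, hyi⟩)
    · exact Or.inr hyc
  obtain ⟨y, hys, hyu⟩ := hsu
  have hyint : y ∈ interior u := (hcover hys).resolve_right (not_not.2 (subset_closure hyu))
  have hsint : s ⊆ interior u := hs.subset_left_of_subset_union isOpen_interior
    isClosed_closure.isOpen_compl (disjoint_compl_right.mono_left interior_subset_closure)
    hcover ⟨y, hys, hyint⟩
  obtain ⟨w, hws, hwu⟩ := hsu'
  exact hwu (interior_subset (hsint hws))

section Lines

variable {n : ℕ}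

lemma isClosed_setOf_exists_line_disjoint {U : Set (EuclideanSpace ℝ (Fin n))} (hU : IsOpen U) :
    IsClosed {p | ∃ α : EuclideanSpace ℝ (Fin n), ‖α‖ = 1 ∧ line p α ∩ U = ∅} := by
  refine IsSeqClosed.isClosed fun p x hpS hpx => ?_
  choose α hα hline using hpS
  obtain ⟨β, hβ, φ, hφ, hαβ⟩ :=
    (isCompact_sphere (0 : EuclideanSpace ℝ (Fin n)) 1).tendsto_subseq (x := α)
      fun m => by simpa using hα m
  refine ⟨β, by simpa using hβ, eq_empty_iff_forall_notMem.2 ?_⟩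
  rintro _ ⟨⟨t, rfl⟩, hq⟩
  have htend : Tendsto (fun m => p (φ m) + t • α (φ m)) atTop (𝓝 (x + t • β)) :=
    (hpx.comp hφ.tendsto_atTop).add (hαβ.const_smul t)
  obtain ⟨m, hm⟩ := (htend.eventually_mem (hU.mem_nhds hq)).exists
  exact eq_empty_iff_forall_notMem.1 (hline (φ m)) _ ⟨⟨t, rfl⟩, hm⟩

lemma WeaklyConvex.exists_mem_segment_line_disjoint {G : Set (EuclideanSpace ℝ (Fin n))}
    (hG : WeaklyConvex G) {x z : EuclideanSpace ℝ (Fin n)} (hx : x ∈ G) (hz : z ∉ G) :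
    ∃ p ∈ segment ℝ x z, ∃ α : EuclideanSpace ℝ (Fin n), ‖α‖ = 1 ∧ line p α ∩ G = ∅ := by
  obtain ⟨p, hp, hpG⟩ := (convex_segment x z).isPreconnected.inter_frontier_nonempty
    ⟨x, left_mem_segment ℝ x z, hx⟩ ⟨z, right_mem_segment ℝ x z, hz⟩
  exact ⟨p, hp, hG p hpG⟩

end Lines

theorem interior_weaklyConvex_general {n : ℕ} (E : Set (EuclideanSpace ℝ (Fin n)))
    (G : ℕ → Set (EuclideanSpace ℝ (Fin n)))
    (hGwc : ∀ k, WeaklyConvex (G k))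
    (hGnest : ∀ k, closure (G (k + 1)) ⊆ G k) (hGE : E = ⋂ k, G k) :
    WeaklyConvex (interior E) := by
  have hintG : ∀ k, interior E ⊆ G k := fun k =>
    interior_subset.trans (hGE ▸ iInter_subset G k)
  intro x hx
  have hxG : ∀ k, x ∈ G k := fun k => hGnest k (closure_mono (hintG (k + 1)) hx.1)
  have hxEc : x ∈ closure Eᶜ := by
    rw [closure_compl, mem_compl_iff, ← interior_interior]
    exact hx.2
  refine (isClosed_setOf_exists_line_disjoint isOpen_interior).closure_subset
    (Metric.mem_closure_iff.2 fun ε hε => ?_)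
  obtain ⟨z, hzE, hxz⟩ := Metric.mem_closure_iff.1 hxEc ε hε
  obtain ⟨k, hzk⟩ : ∃ k, z ∉ G k := by simpa [hGE] using hzE
  obtain ⟨p, hp, α, hα, hline⟩ := (hGwc k).exists_mem_segment_line_disjoint (hxG k) hzk
  have hpx : p ∈ ball x ε :=
    (convex_ball x ε).segment_subset (mem_ball_self hε) (mem_ball'.2 hxz) hp
  exact ⟨p, ⟨α, hα, subset_eq_empty (inter_subset_inter_right _ (hintG k)) hline⟩,
    mem_ball'.1 hpx⟩

theorem interior_weaklyConvex {n : ℕ} (hn : 2 ≤ n) (E : Set (EuclideanSpace ℝ (Fin n)))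
    (hcl : IsClosed E) (hint : (interior E).Nonempty)
    (G : ℕ → Set (EuclideanSpace ℝ (Fin n)))
    (hGopen : ∀ k, IsOpen (G k)) (hGwc : ∀ k, WeaklyConvex (G k))
    (hGnest : ∀ k, closure (G (k + 1)) ⊆ G k) (hGE : E = ⋂ k, G k) :
    WeaklyConvex (interior E) :=
  interior_weaklyConvex_general E G hGwc hGnest hGE
end

section
/- Let E ⊆ ℝⁿ (n ≥ 2) be an open weakly 1-convex set with E^△ ≠ ∅. Then there exists a family of straight lines {γ(x)}_{x ∈ ∂E^△}, each γ(x) passing through x, such that (i) each γ(x) is disjoint from E, and (ii) the union ⋃_{x ∈ ∂E^△} γ(x) ∪ E^△ contains no straight line passing through a point of E^△. -/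
open Set Metric

/-
`E^△` is the complement of `E ∪ L`, where `L` is the set of points through which some line misses
`E`. Because the unit sphere of directions is compact, `L` is closed; weak convexity puts the
frontier of `E` inside `L`, so `E ∪ L = closure E ∪ L` is closed and `E^△` is open. Hence a point
of `∂E^△` lies neither in `E^△` nor in the open set `E`, i.e. it lies in `L`, and we let `γ(x)` be
a line through it missing `E`. A line through a point of `E^△` meets `E`, and the meeting point
lies neither on any `γ(x)` nor in `E^△`.
-/

section

variable {n : ℕ} {E : Set (EuclideanSpace ℝ (Fin n))}

def lineAvoiding (E : Set (EuclideanSpace ℝ (Fin n))) : Set (EuclideanSpace ℝ (Fin n)) :=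
  {x | ∃ α : EuclideanSpace ℝ (Fin n), ‖α‖ = 1 ∧ line x α ∩ E = ∅}

lemma triangle_eq_compl : triangle E = (E ∪ lineAvoiding E)ᶜ := by
  ext x
  simp [triangle, lineAvoiding, nonempty_iff_ne_empty]

lemma lineAvoiding_eq_image_fst :
    lineAvoiding E = Prod.fst ''
      {p : EuclideanSpace ℝ (Fin n) × sphere (0 : EuclideanSpace ℝ (Fin n)) 1 |
        ∀ t : ℝ, p.1 + t • (p.2 : EuclideanSpace ℝ (Fin n)) ∉ E} := by
  ext x
  simp [lineAvoiding, line, eq_empty_iff_forall_notMem]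

lemma isClosed_lineAvoiding (hE : IsOpen E) : IsClosed (lineAvoiding E) := by
  rw [lineAvoiding_eq_image_fst]
  refine isClosedMap_fst_of_compactSpace _ ?_
  simp only [ofPred_forall]
  exact isClosed_iInter fun t => (hE.isClosed_compl).preimage (by fun_prop)

lemma isOpen_triangle (hE : IsOpen E) (hwc : WeaklyConvex E) : IsOpen (triangle E) := by
  have hfrontier : frontier E ⊆ lineAvoiding E := hwc
  have : E ∪ lineAvoiding E = closure E ∪ lineAvoiding E := by
    rw [closure_eq_self_union_frontier, union_assoc, union_eq_right.mpr hfrontier]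
  rw [triangle_eq_compl, this]
  exact (isClosed_closure.union (isClosed_lineAvoiding hE)).isOpen_compl

lemma frontier_triangle_subset_lineAvoiding (hE : IsOpen E) (hwc : WeaklyConvex E) :
    frontier (triangle E) ⊆ lineAvoiding E := by
  intro x hx
  rw [(isOpen_triangle hE hwc).frontier_eq] at hx
  obtain ⟨hx_closure, hx_notMem⟩ := hx
  have hx_notMem_E : x ∉ E :=
    closure_minimal (fun y hy => hy.1) hE.isClosed_compl hx_closure
  rw [triangle_eq_compl, notMem_compl_iff] at hx_notMem
  exact hx_notMem.resolve_left hx_notMem_E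

end

theorem triangle_line_family_general {n : ℕ} (E : Set (EuclideanSpace ℝ (Fin n)))
    (hE : IsOpen E) (hwc : WeaklyConvex E) :
    ∃ γ : EuclideanSpace ℝ (Fin n) → Set (EuclideanSpace ℝ (Fin n)),
      (∀ x ∈ frontier (triangle E),
        (∃ α : EuclideanSpace ℝ (Fin n), ‖α‖ = 1 ∧ γ x = line x α) ∧ γ x ∩ E = ∅) ∧
      ¬ ∃ y ∈ triangle E, ∃ α : EuclideanSpace ℝ (Fin n), ‖α‖ = 1 ∧
          line y α ⊆ (⋃ x ∈ frontier (triangle E), γ x) ∪ triangle E := by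
  have hfrontier : ∀ x ∈ frontier (triangle E),
      ∃ α : EuclideanSpace ℝ (Fin n), ‖α‖ = 1 ∧ line x α ∩ E = ∅ :=
    frontier_triangle_subset_lineAvoiding hE hwc
  choose! α hα using hfrontier
  refine ⟨fun x => line x (α x), fun x hx => ⟨⟨α x, (hα x hx).1, rfl⟩, (hα x hx).2⟩, ?_⟩
  rintro ⟨y, hy, β, hβ, hsub⟩
  obtain ⟨z, hz_line, hzE⟩ := hy.2 β hβ
  rcases hsub hz_line with hz | hz
  · obtain ⟨x, hx, hzx⟩ := mem_iUnion₂.mp hz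
    exact (eq_empty_iff_forall_notMem.mp (hα x hx).2) z ⟨hzx, hzE⟩
  · exact hz.1 hzE

theorem triangle_line_family {n : ℕ} (hn : 2 ≤ n) (E : Set (EuclideanSpace ℝ (Fin n)))
    (hE : IsOpen E) (hwc : WeaklyConvex E) (hne : (triangle E).Nonempty) :
    ∃ γ : EuclideanSpace ℝ (Fin n) → Set (EuclideanSpace ℝ (Fin n)),
      (∀ x ∈ frontier (triangle E),
        (∃ α : EuclideanSpace ℝ (Fin n), ‖α‖ = 1 ∧ γ x = line x α) ∧ γ x ∩ E = ∅) ∧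
      ¬ ∃ y ∈ triangle E, ∃ α : EuclideanSpace ℝ (Fin n), ‖α‖ = 1 ∧
          line y α ⊆ (⋃ x ∈ frontier (triangle E), γ x) ∪ triangle E :=
  triangle_line_family_general E hE hwc
end

section
/- There exists an open set E ⊆ ℝ³ that is both weakly 1-convex and weakly 1-semiconvex, such that its 1-nonconvexity-point set E^△ and its 1-nonsemiconvexity-point set E^◇ coincide and form a nonempty set that is bounded, connected, and not convex. -/
open Set Metric

/-!
Let `H` be the one-sheeted hyperboloid `x² + y² = 1 + z²` and `E` the complement of the closed
solid `{z² ≤ 1, x² + y² ≤ 1 + z²}`, of `H` and of the planes `z = ±1`. Every point outside `E`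
and outside the open solid `T = {z² < 1, x² + y² < 1 + z²}` lies on `H` or on one of the planes;
both are ruled surfaces, so a whole line through that point misses `E`. From a point of `T`
every ray meets `E`: a horizontal ray ends up outside `H`, and any other ray reaches `z² > 1`,
where it can meet `H` only finitely often, its quadratic `x² + y² - z² - 1` being negative
at the start. Hence `E^△ = E^◇ = T`, which is star-shaped about the origin and bounded but not
convex, as its waist at `z = 0` is narrower than its sections at `z = ±1`.
-/

section General

open Filter

variable {n : ℕ} {E T : Set (EuclideanSpace ℝ (Fin n))}

lemma ray_subset_line (x α : EuclideanSpace ℝ (Fin n)) : ray x α ⊆ line x α := by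
  rintro z ⟨t, -, rfl⟩
  exact ⟨t, rfl⟩

lemma line_smul (x α : EuclideanSpace ℝ (Fin n)) {c : ℝ} (hc : c ≠ 0) :
    line x (c • α) = line x α := by
  ext z
  constructor
  · rintro ⟨t, rfl⟩
    exact ⟨t * c, by rw [smul_smul]⟩
  · rintro ⟨t, rfl⟩
    exact ⟨t / c, by rw [smul_smul, div_mul_cancel₀ _ hc]⟩

lemma exists_unit_line_inter_eq_empty {x d : EuclideanSpace ℝ (Fin n)} (hd : d ≠ 0)
    (h : line x d ∩ E = ∅) : ∃ α : EuclideanSpace ℝ (Fin n), ‖α‖ = 1 ∧ line x α ∩ E = ∅ :=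
  ⟨‖d‖⁻¹ • d, norm_smul_inv_norm hd, by rwa [line_smul x d (by simpa using hd)]⟩

lemma diamond_subset_triangle (E : Set (EuclideanSpace ℝ (Fin n))) :
    diamond E ⊆ triangle E := fun _ ⟨hxE, h⟩ =>
  ⟨hxE, fun α hα => (h α hα).mono (inter_subset_inter_left E (ray_subset_line _ α))⟩

lemma WeaklyConvex.weaklySemiconvex (h : WeaklyConvex E) : WeaklySemiconvex E := by
  intro x hx
  obtain ⟨α, hα, hmiss⟩ := h x hx
  exact ⟨α, hα, subset_empty_iff.mp (hmiss ▸ inter_subset_inter_left E (ray_subset_line x α))⟩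

lemma weaklyConvex_of_forall_notMem
    (hline : ∀ x ∉ E, x ∉ T → ∃ α : EuclideanSpace ℝ (Fin n), ‖α‖ = 1 ∧ line x α ∩ E = ∅)
    (hE : IsOpen E) (hT : IsOpen T) (hTE : Disjoint T E) : WeaklyConvex E := by
  intro x hx
  rw [hE.frontier_eq] at hx
  exact hline x hx.2 ((hTE.symm.closure_left hT).notMem_of_mem_left hx.1)

lemma triangle_subset_of_forall_notMem
    (hline : ∀ x ∉ E, x ∉ T → ∃ α : EuclideanSpace ℝ (Fin n), ‖α‖ = 1 ∧ line x α ∩ E = ∅) :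
    triangle E ⊆ T := by
  intro x ⟨hxE, h⟩
  by_contra hxT
  obtain ⟨α, hα, hmiss⟩ := hline x hxE hxT
  exact (h α hα).ne_empty hmiss

lemma triangle_eq_diamond_eq_of_forall_notMem
    (hline : ∀ x ∉ E, x ∉ T → ∃ α : EuclideanSpace ℝ (Fin n), ‖α‖ = 1 ∧ line x α ∩ E = ∅)
    (hTE : Disjoint T E)
    (hray : ∀ x ∈ T, ∀ α : EuclideanSpace ℝ (Fin n), α ≠ 0 → (ray x α ∩ E).Nonempty) :
    triangle E = T ∧ diamond E = T := by
  have hT : T ⊆ diamond E := fun x hx =>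
    ⟨hTE.notMem_of_mem_left hx, fun α hα => hray x hx α (norm_ne_zero_iff.mp (by simp [hα]))⟩
  have hdt := diamond_subset_triangle E
  have htT := triangle_subset_of_forall_notMem hline
  exact ⟨htT.antisymm (hT.trans hdt), (hdt.trans htT).antisymm hT⟩

lemma tendsto_quadratic_atTop {a b c : ℝ} (hc : 0 < c) :
    Tendsto (fun t => c * t ^ 2 + b * t + a) atTop atTop := by
  have h : Tendsto (fun t : ℝ => t * (c * t + b)) atTop atTop :=
    tendsto_id.atTop_mul_atTop₀
      (tendsto_atTop_add_const_right _ b (tendsto_id.const_mul_atTop hc))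
  exact (tendsto_atTop_add_const_right _ a h).congr fun t => by ring

lemma eventually_quadratic_ne_zero {a b c : ℝ} (ha : a ≠ 0) :
    ∀ᶠ t in atTop, c * t ^ 2 + b * t + a ≠ 0 := by
  open Polynomial in
  have hP : C c * X ^ 2 + C b * X + C a ≠ 0 := fun h => ha (by simpa using congrArg (eval 0) h)
  filter_upwards [eventually_atTop_not_isRoot _ hP] with t ht
  simpa using ht

end General

namespace Hyperboloid

open Filter

def quadric (p : EuclideanSpace ℝ (Fin 3)) : ℝ := p 0 ^ 2 + p 1 ^ 2 - p 2 ^ 2 - 1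

/-- The complement of the solid `{z² ≤ 1, quadric ≤ 0}` together with the whole hyperboloid
`quadric = 0` and the planes `z = ±1`. -/
def exampleSet : Set (EuclideanSpace ℝ (Fin 3)) :=
  {p | (1 < p 2 ^ 2 ∧ quadric p ≠ 0) ∨ (p 2 ^ 2 ≠ 1 ∧ 0 < quadric p)}

def solidCore : Set (EuclideanSpace ℝ (Fin 3)) := {p | p 2 ^ 2 < 1 ∧ quadric p < 0}

lemma continuous_quadric : Continuous quadric := by
  unfold quadric
  fun_prop

lemma continuous_coord (i : Fin 3) : Continuous fun p : EuclideanSpace ℝ (Fin 3) => p i :=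
  (EuclideanSpace.proj i).continuous

lemma isOpen_exampleSet : IsOpen exampleSet := by
  have hz := (continuous_coord 2).pow 2
  exact (((isOpen_lt continuous_const hz).inter (isOpen_ne_fun continuous_quadric
    continuous_const)).union ((isOpen_ne_fun hz continuous_const).inter
    (isOpen_lt continuous_const continuous_quadric)))

lemma isOpen_solidCore : IsOpen solidCore :=
  (isOpen_lt ((continuous_coord 2).pow 2) continuous_const).inter
    (isOpen_lt continuous_quadric continuous_const)

lemma disjoint_solidCore_exampleSet : Disjoint solidCore exampleSet := by
  rw [Set.disjoint_left]
  rintro p ⟨hz, hq⟩ (⟨hz', -⟩ | ⟨-, hq'⟩) <;> linarith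

lemma notMem_exampleSet {p : EuclideanSpace ℝ (Fin 3)} (h : p 2 ^ 2 = 1 ∨ quadric p = 0) :
    p ∉ exampleSet := by
  rintro (⟨hz, hq⟩ | ⟨hz, hq⟩) <;> rcases h with h | h <;> simp_all

lemma sq_eq_one_or_quadric_eq_zero {p : EuclideanSpace ℝ (Fin 3)} (hE : p ∉ exampleSet)
    (hT : p ∉ solidCore) : p 2 ^ 2 = 1 ∨ quadric p = 0 := by
  simp only [exampleSet, solidCore, Set.mem_ofPred_eq, not_or, not_and, not_lt, not_not] at hE hT
  by_contra! h
  have hq : quadric p < 0 := lt_of_le_of_ne (hE.2 h.1) h.2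
  have hz : 1 < p 2 ^ 2 := lt_of_le_of_ne (not_lt.mp fun hz => (hT hz).not_gt hq) (Ne.symm h.1)
  exact h.2 (hE.1 hz)

lemma quadric_add_smul (p α : EuclideanSpace ℝ (Fin 3)) (t : ℝ) :
    quadric (p + t • α) = (α 0 ^ 2 + α 1 ^ 2 - α 2 ^ 2) * t ^ 2
      + 2 * (p 0 * α 0 + p 1 * α 1 - p 2 * α 2) * t + quadric p := by
  simp only [quadric, PiLp.add_apply, PiLp.smul_apply, smul_eq_mul]
  ring

/-- Direction of a rectilinear generator of the hyperboloid `quadric = 0` through `x`. -/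
def ruling (x : EuclideanSpace ℝ (Fin 3)) : EuclideanSpace ℝ (Fin 3) :=
  !₂[x 2 * x 0 + x 1, x 2 * x 1 - x 0, x 0 ^ 2 + x 1 ^ 2]

lemma quadric_add_smul_ruling {x : EuclideanSpace ℝ (Fin 3)} (hx : quadric x = 0) (t : ℝ) :
    quadric (x + t • ruling x) = 0 := by
  rw [quadric_add_smul]
  simp only [ruling, Matrix.cons_val_zero, Matrix.cons_val_one, Matrix.cons_val]
  unfold quadric at hx ⊢
  linear_combination (1 - t ^ 2 * (x 0 ^ 2 + x 1 ^ 2)) * hx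

lemma ruling_ne_zero {x : EuclideanSpace ℝ (Fin 3)} (hx : quadric x = 0) : ruling x ≠ 0 := by
  intro h
  have := congrArg (· 2) h
  simp only [ruling, Matrix.cons_val, PiLp.zero_apply] at this
  unfold quadric at hx
  nlinarith

lemma norm_sq_eq (p : EuclideanSpace ℝ (Fin 3)) : ‖p‖ ^ 2 = p 0 ^ 2 + p 1 ^ 2 + p 2 ^ 2 := by
  rw [EuclideanSpace.real_norm_sq_eq, Fin.sum_univ_three]

lemma eventually_mem_exampleSet {p α : EuclideanSpace ℝ (Fin 3)} (hp : p ∈ solidCore)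
    (hα : α ≠ 0) : ∀ᶠ t : ℝ in atTop, p + t • α ∈ exampleSet := by
  have hz (t : ℝ) : (p + t • α) 2 = p 2 + t * α 2 := by simp
  by_cases hα₂ : α 2 = 0
  · have hA : 0 < α 0 ^ 2 + α 1 ^ 2 - α 2 ^ 2 := by
      have := norm_pos_iff.mpr hα
      nlinarith [norm_sq_eq α]
    filter_upwards [(tendsto_quadratic_atTop hA).eventually_gt_atTop 0] with t ht
    refine Or.inr ⟨?_, by rwa [quadric_add_smul]⟩
    rw [hz, hα₂, mul_zero, add_zero]
    exact hp.1.ne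
  · have hA : 0 < α 2 ^ 2 := by positivity
    have hz' : Tendsto (fun t : ℝ => (p + t • α) 2 ^ 2) atTop atTop :=
      (tendsto_quadratic_atTop hA (b := 2 * p 2 * α 2) (a := p 2 ^ 2)).congr fun t => by
        rw [hz]; ring
    filter_upwards [hz'.eventually_gt_atTop 1, eventually_quadratic_ne_zero hp.2.ne] with t h1 h2
    exact Or.inl ⟨h1, by rwa [quadric_add_smul]⟩

lemma ray_inter_exampleSet_nonempty {p α : EuclideanSpace ℝ (Fin 3)} (hp : p ∈ solidCore)
    (hα : α ≠ 0) : (ray p α ∩ exampleSet).Nonempty := by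
  obtain ⟨t, ht0, ht⟩ := ((eventually_ge_atTop 0).and (eventually_mem_exampleSet hp hα)).exists
  exact ⟨_, ⟨t, ht0, rfl⟩, ht⟩

lemma exists_unit_line_inter_exampleSet_eq_empty {x : EuclideanSpace ℝ (Fin 3)}
    (hx : x 2 ^ 2 = 1 ∨ quadric x = 0) :
    ∃ α : EuclideanSpace ℝ (Fin 3), ‖α‖ = 1 ∧ line x α ∩ exampleSet = ∅ := by
  obtain ⟨d, hd, hline⟩ : ∃ d ≠ 0, ∀ t : ℝ, (x + t • d) 2 ^ 2 = 1 ∨ quadric (x + t • d) = 0 := by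
    rcases hx with hx | hx
    · exact ⟨EuclideanSpace.single 0 1, by simp, fun t => Or.inl (by simpa using hx)⟩
    · exact ⟨ruling x, ruling_ne_zero hx, fun t => Or.inr (quadric_add_smul_ruling hx t)⟩
  refine exists_unit_line_inter_eq_empty hd (Set.eq_empty_of_forall_notMem ?_)
  rintro _ ⟨⟨t, rfl⟩, hE⟩
  exact notMem_exampleSet (hline t) hE

lemma zero_mem_solidCore : (0 : EuclideanSpace ℝ (Fin 3)) ∈ solidCore := by
  norm_num [solidCore, quadric]

lemma quadric_smul (c : ℝ) (p : EuclideanSpace ℝ (Fin 3)) :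
    quadric (c • p) = c ^ 2 * (quadric p + 1) - 1 := by
  simp only [quadric, PiLp.smul_apply, smul_eq_mul]
  ring

lemma starConvex_solidCore : StarConvex ℝ 0 solidCore := by
  rintro p ⟨hz, hq⟩ a b ha hb hab
  have hb1 : b ^ 2 ≤ 1 := by nlinarith
  rw [smul_zero, zero_add]
  refine ⟨?_, ?_⟩
  · simp only [PiLp.smul_apply, smul_eq_mul]
    nlinarith
  · rw [quadric_smul]
    rcases le_or_gt 0 (quadric p + 1) with h | h
    · nlinarith [mul_le_mul_of_nonneg_right hb1 h]
    · nlinarith [mul_nonpos_of_nonneg_of_nonpos (sq_nonneg b) h.le]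

lemma isBounded_solidCore : Bornology.IsBounded solidCore := by
  refine (Metric.isBounded_closedBall (x := 0) (r := 2)).subset fun p ⟨hz, hq⟩ => ?_
  rw [mem_closedBall_zero_iff]
  unfold quadric at hq
  nlinarith [norm_sq_eq p, norm_nonneg p]

/-- The midpoint `(1, 0, 0)` of `(1, 0, ±1/2)` lies on the waist circle of the hyperboloid. -/
lemma not_convex_solidCore : ¬ Convex ℝ solidCore := by
  have hmem (s : ℝ) (hs : s ^ 2 = 1) : !₂[1, 0, s / 2] ∈ solidCore := by
    simp only [solidCore, quadric, Set.mem_ofPred_eq, Matrix.cons_val, Matrix.cons_val_zero,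
      Matrix.cons_val_one]
    constructor <;> nlinarith
  intro h
  have hmid := (h (hmem 1 (one_pow 2)) (hmem (-1) (by norm_num)) (a := 1 / 2) (b := 1 / 2)
    (by norm_num) (by norm_num) (by norm_num)).2
  simp only [quadric, PiLp.add_apply, PiLp.smul_apply, smul_eq_mul, Matrix.cons_val_zero,
    Matrix.cons_val_one, Matrix.cons_val] at hmid
  norm_num at hmid

end Hyperboloid

open Hyperboloid in
theorem exists_bounded_nonconvex_example :
    ∃ E : Set (EuclideanSpace ℝ (Fin 3)), IsOpen E ∧ WeaklyConvex E ∧ WeaklySemiconvex E ∧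
      triangle E = diamond E ∧ (triangle E).Nonempty ∧
      Bornology.IsBounded (triangle E) ∧ IsConnected (triangle E) ∧
      ¬ Convex ℝ (triangle E) := by
  have hline (x) (hE : x ∉ exampleSet) (hT : x ∉ solidCore) :
      ∃ α : EuclideanSpace ℝ (Fin 3), ‖α‖ = 1 ∧ line x α ∩ exampleSet = ∅ :=
    exists_unit_line_inter_exampleSet_eq_empty (sq_eq_one_or_quadric_eq_zero hE hT)
  have hconvex := weaklyConvex_of_forall_notMem hline isOpen_exampleSet isOpen_solidCore
    disjoint_solidCore_exampleSet
  obtain ⟨htriangle, hdiamond⟩ := triangle_eq_diamond_eq_of_forall_notMem hline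
    disjoint_solidCore_exampleSet fun x hx α hα => ray_inter_exampleSet_nonempty hx hα
  refine ⟨exampleSet, isOpen_exampleSet, hconvex, hconvex.weaklySemiconvex,
    htriangle.trans hdiamond.symm, ?_⟩
  rw [htriangle]
  exact ⟨⟨0, zero_mem_solidCore⟩, isBounded_solidCore,
    (starConvex_solidCore.isPathConnected zero_mem_solidCore).isConnected, not_convex_solidCore⟩
end

section
/- Let E^{n-1} ⊆ ℝ^{n-1} be an open weakly 1-convex and weakly 1-semiconvex set with P := (E^{n-1})^◇ = (E^{n-1})^△ ≠ ∅, let D^{n-1} be the convex hull of E^{n-1}, and set Eⁿ := (D^{n-1} × (-3/2, -1)) ∪ (E^{n-1} × (-1, 1)) ∪ (D^{n-1} × (1, 3/2)) ⊆ ℝⁿ. Then Eⁿ is weakly 1-convex and weakly 1-semiconvex, and (Eⁿ)^△ = (Eⁿ)^◇ = P × (-1, 1). -/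
open Set Metric

/-- The closed ray with endpoint `x` in direction `α` (in any real vector space). -/
def rayV {V : Type*} [AddCommGroup V] [Module ℝ V] (x α : V) : Set V :=
  {z | ∃ t : ℝ, 0 ≤ t ∧ z = x + t • α}

/-- The straight line through `x` in direction `α`. -/
def lineV {V : Type*} [AddCommGroup V] [Module ℝ V] (x α : V) : Set V :=
  {z | ∃ t : ℝ, z = x + t • α}

/-- The set `E^◇` of 1-nonsemiconvexity points of `E`. -/
def diamondV {V : Type*} [AddCommGroup V] [Module ℝ V] (E : Set V) : Set V :=
  {x | x ∉ E ∧ ∀ α : V, α ≠ 0 → (rayV x α ∩ E).Nonempty}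

/-- The set `E^△` of 1-nonconvexity points of `E`. -/
def triangleV {V : Type*} [AddCommGroup V] [Module ℝ V] (E : Set V) : Set V :=
  {x | x ∉ E ∧ ∀ α : V, α ≠ 0 → (lineV x α ∩ E).Nonempty}

/-- Weak 1-semiconvexity of an open set. -/
def WeaklySemiconvexV {V : Type*} [AddCommGroup V] [Module ℝ V] [TopologicalSpace V]
    (E : Set V) : Prop :=
  ∀ x ∈ frontier E, ∃ α : V, α ≠ 0 ∧ rayV x α ∩ E = ∅

/-- Weak 1-convexity of an open set. -/
def WeaklyConvexV {V : Type*} [AddCommGroup V] [Module ℝ V] [TopologicalSpace V]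
    (E : Set V) : Prop :=
  ∀ x ∈ frontier E, ∃ α : V, α ≠ 0 ∧ lineV x α ∩ E = ∅

/-! Every horizontal slice of `Eⁿ` is `E`, `D` or empty, and the open convex set `D` is weakly
convex: a hyperplane separating a point from `D` contains a line through it, since `m ≥ 2`.
Hence at a boundary point of `Eⁿ` a horizontal line (ray) misses `Eⁿ`, and a point outside `Eⁿ`
all of whose horizontal lines meet `Eⁿ` lies in the middle layer over a point of `P`.
Conversely, let `x ∈ P` and `|s| < 1`. A vertical ray from `(x, s)` enters a `D`-slab. Any other
ray projects to a ray from `x` that meets `E`; if the height has already left `(-1, 1)` there,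
the part of the ray lying over the convex set `D` crosses a `D`-slab. -/

theorem LinearMap.exists_ne_zero_apply_eq_zero {K V : Type*} [Field K] [AddCommGroup V]
    [Module K V] (hV : 2 ≤ Module.finrank K V) (f : V →ₗ[K] K) : ∃ a ≠ 0, f a = 0 := by
  have : FiniteDimensional K V := FiniteDimensional.of_finrank_pos (by omega)
  obtain ⟨a, hker, ha⟩ := Submodule.exists_mem_ne_zero_of_ne_bot
    (LinearMap.ker_ne_bot_of_finrank_lt (f := f) (by rw [Module.finrank_self]; omega))
  exact ⟨a, ha, hker⟩

section Module

variable {V : Type*} [AddCommGroup V] [Module ℝ V]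

theorem rayV_subset_lineV (x α : V) : rayV x α ⊆ lineV x α := by
  rintro _ ⟨t, -, rfl⟩
  exact ⟨t, rfl⟩

theorem diamondV_subset_triangleV (E : Set V) : diamondV E ⊆ triangleV E :=
  fun _ hx => ⟨hx.1, fun α hα =>
    (hx.2 α hα).mono (inter_subset_inter_left E (rayV_subset_lineV _ _))⟩

theorem triangleV_empty [Nontrivial V] : triangleV (∅ : Set V) = ∅ := by
  obtain ⟨α, hα⟩ := exists_ne (0 : V)
  exact eq_empty_of_forall_notMem fun x hx => by simpa using hx.2 α hα

theorem lineV_prodMk_zero (x a : V) (s : ℝ) :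
    lineV (x, s) (a, (0 : ℝ)) = (·, s) '' lineV x a := by
  ext ⟨y, r⟩
  simp [lineV, Prod.ext_iff, eq_comm]

theorem rayV_prodMk_zero (x a : V) (s : ℝ) :
    rayV (x, s) (a, (0 : ℝ)) = (·, s) '' rayV x a := by
  ext ⟨y, r⟩
  simp [rayV, Prod.ext_iff, eq_comm]

theorem mem_triangleV_slice {F : Set (V × ℝ)} {x : V} {s : ℝ} (h : (x, s) ∈ triangleV F) :
    x ∈ triangleV ((·, s) ⁻¹' F) :=
  ⟨h.1, fun a ha => by
    simpa [lineV_prodMk_zero, image_inter_nonempty_iff] using h.2 (a, 0) (by simp [ha])⟩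

end Module

section Topological

variable {V : Type*} [AddCommGroup V] [Module ℝ V] [TopologicalSpace V]

theorem weaklyConvexV_empty : WeaklyConvexV (∅ : Set V) := by
  simp [WeaklyConvexV]

theorem WeaklyConvexV.weaklySemiconvexV {E : Set V} (hE : WeaklyConvexV E) :
    WeaklySemiconvexV E := fun x hx => by
  obtain ⟨α, hα, hline⟩ := hE x hx
  exact ⟨α, hα, subset_empty_iff.1 <| hline ▸ inter_subset_inter_left E (rayV_subset_lineV x α)⟩

theorem weaklyConvexV_of_slices [Nontrivial V] {F : Set (V × ℝ)}
    (hF : ∀ s, WeaklyConvexV ((·, s) ⁻¹' F))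
    (hfr : ∀ x s, (x, s) ∈ frontier F → x ∈ frontier ((·, s) ⁻¹' F) ∨ (·, s) ⁻¹' F = ∅) :
    WeaklyConvexV F := by
  rintro ⟨x, s⟩ hx
  obtain ⟨a, ha, hline⟩ : ∃ a : V, a ≠ 0 ∧ lineV x a ∩ (·, s) ⁻¹' F = ∅ := by
    rcases hfr x s hx with hx | hempty
    · exact hF s x hx
    · obtain ⟨a, ha⟩ := exists_ne (0 : V)
      exact ⟨a, ha, by rw [hempty, inter_empty]⟩
  refine ⟨(a, 0), by simp [ha], ?_⟩
  rw [← not_nonempty_iff_eq_empty, lineV_prodMk_zero, image_inter_nonempty_iff, hline]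
  exact not_nonempty_empty

theorem weaklySemiconvexV_of_slices [Nontrivial V] {F : Set (V × ℝ)}
    (hF : ∀ s, WeaklySemiconvexV ((·, s) ⁻¹' F))
    (hfr : ∀ x s, (x, s) ∈ frontier F → x ∈ frontier ((·, s) ⁻¹' F) ∨ (·, s) ⁻¹' F = ∅) :
    WeaklySemiconvexV F := by
  rintro ⟨x, s⟩ hx
  obtain ⟨a, ha, hray⟩ : ∃ a : V, a ≠ 0 ∧ rayV x a ∩ (·, s) ⁻¹' F = ∅ := by
    rcases hfr x s hx with hx | hempty
    · exact hF s x hx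
    · obtain ⟨a, ha⟩ := exists_ne (0 : V)
      exact ⟨a, ha, by rw [hempty, inter_empty]⟩
  refine ⟨(a, 0), by simp [ha], ?_⟩
  rw [← not_nonempty_iff_eq_empty, rayV_prodMk_zero, image_inter_nonempty_iff, hray]
  exact not_nonempty_empty

end Topological

section Separation

variable {V : Type*} [AddCommGroup V] [Module ℝ V] [TopologicalSpace V]
  [IsTopologicalAddGroup V] [ContinuousSMul ℝ V] {D : Set V}

theorem Convex.exists_lineV_inter_eq_empty (hV : 2 ≤ Module.finrank ℝ V) (hDc : Convex ℝ D)
    (hDo : IsOpen D) {x : V} (hx : x ∉ D) : ∃ a ≠ 0, lineV x a ∩ D = ∅ := by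
  obtain ⟨f, hf⟩ := geometric_hahn_banach_open_point hDc hDo hx
  obtain ⟨a, ha, hfa⟩ := (f : V →ₗ[ℝ] ℝ).exists_ne_zero_apply_eq_zero hV
  replace hfa : f a = 0 := hfa
  refine ⟨a, ha, eq_empty_of_forall_notMem ?_⟩
  rintro _ ⟨⟨t, rfl⟩, hmem⟩
  simpa [hfa] using hf _ hmem

theorem Convex.weaklyConvexV (hV : 2 ≤ Module.finrank ℝ V) (hDc : Convex ℝ D) (hDo : IsOpen D) :
    WeaklyConvexV D := fun _ hx =>
  hDc.exists_lineV_inter_eq_empty hV hDo (by rw [hDo.frontier_eq] at hx; exact hx.2)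

theorem Convex.triangleV_eq_empty (hV : 2 ≤ Module.finrank ℝ V) (hDc : Convex ℝ D)
    (hDo : IsOpen D) : triangleV D = ∅ := by
  refine eq_empty_of_forall_notMem fun x hx => ?_
  obtain ⟨a, ha, hline⟩ := hDc.exists_lineV_inter_eq_empty hV hDo hx.1
  exact (hx.2 a ha).ne_empty hline

theorem Convex.triangleV_subset (hV : 2 ≤ Module.finrank ℝ V) (hDc : Convex ℝ D)
    (hDo : IsOpen D) {E : Set V} (hED : E ⊆ D) : triangleV E ⊆ D := by
  intro x hx
  by_contra hxD
  obtain ⟨a, ha, hline⟩ := hDc.exists_lineV_inter_eq_empty hV hDo hxD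
  exact (hx.2 a ha).ne_empty (subset_empty_iff.1 (hline ▸ inter_subset_inter_right _ hED))

/-- Openness of `D` lets the segment go strictly beyond `x + t₀ • a`, so that the height
`s + t * c` passes `u` even when `u = s + t₀ * c`. -/
theorem Convex.exists_nonneg_mem_of_lt_le (hDc : Convex ℝ D) (hDo : IsOpen D) {x a : V}
    {t₀ s c u v : ℝ} (hx : x ∈ D) (ht₀ : 0 ≤ t₀) (hy : x + t₀ • a ∈ D) (hsu : s < u)
    (huv : u < v) (hu : u ≤ s + t₀ * c) :
    ∃ t, 0 ≤ t ∧ x + t • a ∈ D ∧ s + t * c ∈ Ioo u v := by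
  set L := {t : ℝ | x + t • a ∈ D}
  have hLo : IsOpen L := hDo.preimage (by fun_prop)
  have hLc : L.OrdConnected :=
    ((hDc.translate_preimage_right x).is_linear_preimage
      (IsLinearMap.isLinearMap_smul' a)).ordConnected
  obtain ⟨t₁, ht₀₁, ht₁⟩ := Filter.Eventually.exists_gt (hLo.mem_nhds hy)
  have hc : 0 < c := pos_of_mul_pos_right (by linarith) ht₀
  obtain ⟨h, huh, hhw⟩ := exists_between (lt_min huv (by nlinarith) : u < min v (s + t₁ * c))
  obtain ⟨hhv, hht⟩ := lt_min_iff.1 hhw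
  refine ⟨(h - s) / c, div_nonneg (by linarith) hc.le,
    hLc.out (by simpa [L] using hx) ht₁ ⟨div_nonneg (by linarith) hc.le, ?_⟩, ?_⟩
  · rw [div_le_iff₀ hc]
    linarith
  · rw [div_mul_cancel₀ _ hc.ne', add_sub_cancel]
    exact ⟨huh, hhv⟩

end Separation

section Sandwich

variable {V : Type*} {E D : Set V}

def sandwich (E D : Set V) : Set (V × ℝ) :=
  (D ×ˢ Ioo (-(3/2) : ℝ) (-1)) ∪ (E ×ˢ Ioo (-1 : ℝ) 1) ∪ (D ×ˢ Ioo (1 : ℝ) (3/2))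

theorem sandwich_slice_of_mem {s : ℝ} (hs : s ∈ Ioo (-1 : ℝ) 1) :
    (·, s) ⁻¹' sandwich E D = E := by
  ext y
  simp only [sandwich, mem_preimage, mem_union, mem_prod, mem_Ioo] at hs ⊢
  constructor
  · rintro ((⟨-, -, h⟩ | ⟨hy, -⟩) | ⟨-, h, -⟩)
    exacts [absurd hs.1 h.not_gt, hy, absurd hs.2 h.not_gt]
  · exact fun hy => Or.inl (Or.inr ⟨hy, hs⟩)

theorem sandwich_slice_of_notMem {s : ℝ} (hs : s ∉ Ioo (-1 : ℝ) 1) :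
    (·, s) ⁻¹' sandwich E D = D ∨ (·, s) ⁻¹' sandwich E D = ∅ := by
  by_cases hout : s ∈ Ioo (-(3/2) : ℝ) (-1) ∪ Ioo (1 : ℝ) (3/2)
  · left
    ext y
    simp only [sandwich, mem_preimage, mem_union, mem_prod]
    rcases hout with h | h <;> tauto
  · right
    ext y
    simp only [mem_union, not_or] at hout
    simp only [sandwich, mem_preimage, mem_union, mem_prod, mem_empty_iff_false, iff_false]
    tauto

section Topology

variable [TopologicalSpace V]

theorem isOpen_sandwich (hE : IsOpen E) (hD : IsOpen D) : IsOpen (sandwich E D) :=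
  ((hD.prod isOpen_Ioo).union (hE.prod isOpen_Ioo)).union (hD.prod isOpen_Ioo)

theorem closure_sandwich : closure (sandwich E D) = (closure D ×ˢ Icc (-(3/2) : ℝ) (-1)) ∪
    (closure E ×ˢ Icc (-1 : ℝ) 1) ∪ (closure D ×ˢ Icc (1 : ℝ) (3/2)) := by
  simp only [sandwich, closure_union, closure_prod_eq,
    closure_Ioo (by norm_num : (-(3/2) : ℝ) ≠ -1), closure_Ioo (by norm_num : (-1 : ℝ) ≠ 1),
    closure_Ioo (by norm_num : (1 : ℝ) ≠ 3/2)]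

theorem mem_frontier_sandwich_slice (hE : IsOpen E) (hD : IsOpen D) (hED : E ⊆ D) {x : V} {s : ℝ}
    (h : (x, s) ∈ frontier (sandwich E D)) :
    x ∈ frontier ((·, s) ⁻¹' sandwich E D) ∨ (·, s) ⁻¹' sandwich E D = ∅ := by
  rw [(isOpen_sandwich hE hD).frontier_eq, closure_sandwich] at h
  obtain ⟨hcl, hx⟩ := h
  have hx : x ∉ (·, s) ⁻¹' sandwich E D := hx
  by_cases hs : s ∈ Ioo (-1 : ℝ) 1
  · left
    rw [sandwich_slice_of_mem hs] at hx ⊢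
    rw [hE.frontier_eq]
    refine ⟨?_, hx⟩
    rcases hcl with (⟨-, h⟩ | ⟨hxE, -⟩) | ⟨-, h⟩
    exacts [absurd hs.1 h.2.not_gt, hxE, absurd hs.2 h.1.not_gt]
  · rcases sandwich_slice_of_notMem (E := E) (D := D) hs with hslice | hslice
    · left
      rw [hslice] at hx ⊢
      rw [hD.frontier_eq]
      refine ⟨?_, hx⟩
      rcases hcl with (⟨hxD, -⟩ | ⟨hxE, -⟩) | ⟨hxD, -⟩
      exacts [hxD, closure_mono hED hxE, hxD]
    · exact Or.inr hslice

end Topology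

variable [AddCommGroup V] [Module ℝ V]

theorem rayV_vertical_inter_sandwich_nonempty {x : V} {s c : ℝ} (hx : x ∈ D)
    (hs : s ∈ Ioo (-1 : ℝ) 1) (hc : c ≠ 0) : (rayV (x, s) (0, c) ∩ sandwich E D).Nonempty := by
  rcases hc.lt_or_gt with hc | hc
  · refine ⟨_, ⟨(-(5/4) - s) / c, div_nonneg_of_nonpos (by linarith [hs.1]) hc.le, rfl⟩,
      Or.inl (Or.inl ⟨by simpa using hx, ?_⟩)⟩
    change s + (-(5/4) - s) / c * c ∈ _
    rw [div_mul_cancel₀ _ hc.ne, add_sub_cancel]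
    norm_num
  · refine ⟨_, ⟨(5/4 - s) / c, div_nonneg (by linarith [hs.2]) hc.le, rfl⟩,
      Or.inr ⟨by simpa using hx, ?_⟩⟩
    change s + (5/4 - s) / c * c ∈ _
    rw [div_mul_cancel₀ _ hc.ne', add_sub_cancel]
    norm_num

variable [TopologicalSpace V] [IsTopologicalAddGroup V] [ContinuousSMul ℝ V]

theorem weaklyConvexV_sandwich (hV : 2 ≤ Module.finrank ℝ V) (hE : IsOpen E)
    (hwc : WeaklyConvexV E) (hDc : Convex ℝ D) (hD : IsOpen D) (hED : E ⊆ D) :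
    WeaklyConvexV (sandwich E D) := by
  have := Module.nontrivial_of_finrank_pos (R := ℝ) (M := V) (by omega)
  refine weaklyConvexV_of_slices (fun s => ?_) fun x s => mem_frontier_sandwich_slice hE hD hED
  by_cases hs : s ∈ Ioo (-1 : ℝ) 1
  · rwa [sandwich_slice_of_mem hs]
  · rcases sandwich_slice_of_notMem (E := E) (D := D) hs with h | h <;> rw [h]
    exacts [hDc.weaklyConvexV hV hD, weaklyConvexV_empty]

theorem weaklySemiconvexV_sandwich (hV : 2 ≤ Module.finrank ℝ V) (hE : IsOpen E)
    (hws : WeaklySemiconvexV E) (hDc : Convex ℝ D) (hD : IsOpen D) (hED : E ⊆ D) :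
    WeaklySemiconvexV (sandwich E D) := by
  have := Module.nontrivial_of_finrank_pos (R := ℝ) (M := V) (by omega)
  refine weaklySemiconvexV_of_slices (fun s => ?_) fun x s => mem_frontier_sandwich_slice hE hD hED
  by_cases hs : s ∈ Ioo (-1 : ℝ) 1
  · rwa [sandwich_slice_of_mem hs]
  · rcases sandwich_slice_of_notMem (E := E) (D := D) hs with h | h <;> rw [h]
    exacts [(hDc.weaklyConvexV hV hD).weaklySemiconvexV,
      weaklyConvexV_empty.weaklySemiconvexV]

theorem triangleV_sandwich_subset (hV : 2 ≤ Module.finrank ℝ V) (hDc : Convex ℝ D)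
    (hD : IsOpen D) : triangleV (sandwich E D) ⊆ triangleV E ×ˢ Ioo (-1 : ℝ) 1 := by
  have := Module.nontrivial_of_finrank_pos (R := ℝ) (M := V) (by omega)
  rintro ⟨x, s⟩ h
  have hx := mem_triangleV_slice h
  by_cases hs : s ∈ Ioo (-1 : ℝ) 1
  · rw [sandwich_slice_of_mem hs] at hx
    exact ⟨hx, hs⟩
  · rcases sandwich_slice_of_notMem (E := E) (D := D) hs with h | h <;> rw [h] at hx
    · rw [hDc.triangleV_eq_empty hV hD] at hx
      exact hx.elim
    · rw [triangleV_empty] at hx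
      exact hx.elim

theorem rayV_inter_sandwich_nonempty (hDc : Convex ℝ D) (hD : IsOpen D) (hED : E ⊆ D)
    {x a : V} {s c t₀ : ℝ} (hx : x ∈ D) (hs : s ∈ Ioo (-1 : ℝ) 1) (ht₀ : 0 ≤ t₀)
    (hy : x + t₀ • a ∈ E) : (rayV (x, s) (a, c) ∩ sandwich E D).Nonempty := by
  by_cases hmid : s + t₀ * c ∈ Ioo (-1 : ℝ) 1
  · exact ⟨_, ⟨t₀, ht₀, rfl⟩, Or.inl (Or.inr ⟨hy, hmid⟩)⟩
  rcases le_or_gt 1 (s + t₀ * c) with hup | hlt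
  · obtain ⟨t, ht, hxt, hst⟩ := hDc.exists_nonneg_mem_of_lt_le hD hx ht₀ (hED hy) hs.2
      (by norm_num : (1 : ℝ) < 3/2) hup
    exact ⟨_, ⟨t, ht, rfl⟩, Or.inr ⟨hxt, hst⟩⟩
  · have hlow : s + t₀ * c ≤ -1 := by
      by_contra h
      exact hmid ⟨by linarith, hlt⟩
    obtain ⟨t, ht, hxt, hst⟩ := hDc.exists_nonneg_mem_of_lt_le (s := -s) (c := -c) hD hx ht₀
      (hED hy) (by linarith [hs.1]) (by norm_num : (1 : ℝ) < 3/2) (by linarith)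
    have hst' : s + t * c ∈ Ioo (-(3/2) : ℝ) (-1) := ⟨by linarith [hst.2], by linarith [hst.1]⟩
    exact ⟨_, ⟨t, ht, rfl⟩, Or.inl (Or.inl ⟨hxt, hst'⟩)⟩

theorem prod_Ioo_subset_diamondV_sandwich (hV : 2 ≤ Module.finrank ℝ V) (hDc : Convex ℝ D)
    (hD : IsOpen D) (hED : E ⊆ D) : diamondV E ×ˢ Ioo (-1 : ℝ) 1 ⊆ diamondV (sandwich E D) := by
  rintro ⟨x, s⟩ ⟨hx, hs⟩
  have hxD : x ∈ D :=
    hDc.triangleV_subset hV hD hED (diamondV_subset_triangleV E hx)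
  refine ⟨fun h => hx.1 (by rwa [← sandwich_slice_of_mem (E := E) (D := D) hs]), ?_⟩
  rintro ⟨a, c⟩ hac
  rcases eq_or_ne a 0 with rfl | ha
  · exact rayV_vertical_inter_sandwich_nonempty hxD hs (by rintro rfl; exact hac rfl)
  · obtain ⟨_, ⟨t₀, ht₀, rfl⟩, hy⟩ := hx.2 a ha
    exact rayV_inter_sandwich_nonempty hDc hD hED hxD hs ht₀ hy

end Sandwich

theorem product_construction_general {m : ℕ} (hm : 2 ≤ m)
    (E : Set (EuclideanSpace ℝ (Fin m))) (hE : IsOpen E)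
    (hwc : WeaklyConvexV E) (hws : WeaklySemiconvexV E)
    (P : Set (EuclideanSpace ℝ (Fin m)))
    (hPd : P = diamondV E) (hPt : P = triangleV E)
    (D : Set (EuclideanSpace ℝ (Fin m))) (hD : D = convexHull ℝ E)
    (En : Set (EuclideanSpace ℝ (Fin m) × ℝ))
    (hEn : En = (D ×ˢ Ioo (-(3/2) : ℝ) (-1)) ∪ (E ×ˢ Ioo (-1 : ℝ) 1) ∪
        (D ×ˢ Ioo (1 : ℝ) (3/2))) :
    WeaklyConvexV En ∧ WeaklySemiconvexV En ∧
      triangleV En = P ×ˢ Ioo (-1 : ℝ) 1 ∧ diamondV En = P ×ˢ Ioo (-1 : ℝ) 1 := by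
  have hV : 2 ≤ Module.finrank ℝ (EuclideanSpace ℝ (Fin m)) := by
    rwa [finrank_euclideanSpace_fin]
  have hDc : Convex ℝ D := hD ▸ convex_convexHull ℝ E
  have hDo : IsOpen D := hD ▸ hE.convexHull
  have hED : E ⊆ D := hD ▸ subset_convexHull ℝ E
  replace hEn : En = sandwich E D := hEn
  subst hEn
  have hT : triangleV (sandwich E D) ⊆ P ×ˢ Ioo (-1 : ℝ) 1 :=
    hPt ▸ triangleV_sandwich_subset hV hDc hDo
  have hP : P ×ˢ Ioo (-1 : ℝ) 1 ⊆ diamondV (sandwich E D) :=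
    hPd ▸ prod_Ioo_subset_diamondV_sandwich hV hDc hDo hED
  have hDT := diamondV_subset_triangleV (sandwich E D)
  exact ⟨weaklyConvexV_sandwich hV hE hwc hDc hDo hED,
    weaklySemiconvexV_sandwich hV hE hws hDc hDo hED,
    hT.antisymm (hP.trans hDT), (hDT.trans hT).antisymm hP⟩

theorem product_construction {m : ℕ} (hm : 2 ≤ m)
    (E : Set (EuclideanSpace ℝ (Fin m))) (hE : IsOpen E)
    (hwc : WeaklyConvexV E) (hws : WeaklySemiconvexV E)
    (P : Set (EuclideanSpace ℝ (Fin m)))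
    (hPd : P = diamondV E) (hPt : P = triangleV E) (hPne : P.Nonempty)
    (D : Set (EuclideanSpace ℝ (Fin m))) (hD : D = convexHull ℝ E)
    (En : Set (EuclideanSpace ℝ (Fin m) × ℝ))
    (hEn : En = (D ×ˢ Ioo (-(3/2) : ℝ) (-1)) ∪ (E ×ˢ Ioo (-1 : ℝ) 1) ∪
        (D ×ˢ Ioo (1 : ℝ) (3/2))) :
    WeaklyConvexV En ∧ WeaklySemiconvexV En ∧
      triangleV En = P ×ˢ Ioo (-1 : ℝ) 1 ∧ diamondV En = P ×ˢ Ioo (-1 : ℝ) 1 :=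
  product_construction_general hm E hE hwc hws P hPd hPt D hD En hEn
end
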